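/- Let A be a Banach lattice algebra and let a, b ∈ A each be both a left band projection and a right band projection. Then ab = ba. -/

import Mathlib

/-!
Left multiplications by `a` and `b` are band projections of `A`, and band projections commute:
if `z = P (Q x)` then `0 ≤ z ≤ Q x` forces `Q z = z`, so `P (Q x) = Q z ≤ Q (P x)`, and symmetrically.
Applied to `x = a` and `x = b`, the right band projection identities give `a (b a) = b a` and
`b (a b) = a b`; since `b a ≤ b` and `a b ≤ a`, this yields `b a ≤ a b ≤ b a`.
-/

structure IsBandProjection {E : Type*} [AddCommGroup E] [PartialOrder E] (P : E →+ E) : Prop where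
  map_nonneg : ∀ x, 0 ≤ x → 0 ≤ P x
  map_le_self : ∀ x, 0 ≤ x → P x ≤ x
  map_map : ∀ x, 0 ≤ x → P (P x) = P x

namespace IsBandProjection

variable {E : Type*} [AddCommGroup E] [PartialOrder E] [IsOrderedAddMonoid E] {P Q : E →+ E}

theorem monotone (hP : IsBandProjection P) : Monotone P := fun x y hxy => by
  simpa only [map_sub, sub_nonneg] using hP.map_nonneg (y - x) (sub_nonneg.mpr hxy)

theorem map_eq_self_of_le_map (hP : IsBandProjection P) {x y : E} (hx : 0 ≤ x) (hy : 0 ≤ y)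
    (hyx : y ≤ P x) : P y = y := by
  refine le_antisymm (hP.map_le_self y hy) ?_
  have h := hP.map_le_self (P x - y) (sub_nonneg.mpr hyx)
  rwa [map_sub, hP.map_map x hx, sub_le_sub_iff_left] at h

theorem map_map_le (hP : IsBandProjection P) (hQ : IsBandProjection Q) {x : E} (hx : 0 ≤ x) :
    P (Q x) ≤ Q (P x) := by
  have hQx : 0 ≤ Q x := hQ.map_nonneg x hx
  have hQz : Q (P (Q x)) = P (Q x) :=
    hQ.map_eq_self_of_le_map hx (hP.map_nonneg _ hQx) (hP.map_le_self _ hQx)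
  calc P (Q x) = Q (P (Q x)) := hQz.symm
    _ ≤ Q (P x) := hQ.monotone (hP.monotone (hQ.map_le_self x hx))

theorem map_map_comm (hP : IsBandProjection P) (hQ : IsBandProjection Q) {x : E} (hx : 0 ≤ x) :
    P (Q x) = Q (P x) :=
  le_antisymm (hP.map_map_le hQ hx) (hQ.map_map_le hP hx)

end IsBandProjection

theorem isBandProjection_mulLeft {R A : Type*} [CommSemiring R] [AddCommGroup A] [PartialOrder A]
    [Module R A] (mul : A →ₗ[R] A →ₗ[R] A)
    (mul_assoc : ∀ a b c : A, mul (mul a b) c = mul a (mul b c))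
    (mul_nonneg : ∀ a b : A, 0 ≤ a → 0 ≤ b → 0 ≤ mul a b) {a : A} (ha : 0 ≤ a)
    (haL : ∀ x : A, 0 ≤ x → mul a x ≤ x ∧ mul (mul a a) x = mul a x) :
    IsBandProjection (mul a).toAddMonoidHom where
  map_nonneg x hx := mul_nonneg a x ha hx
  map_le_self x hx := (haL x hx).1
  map_map x hx := (mul_assoc a a x).symm.trans (haL x hx).2

theorem left_and_right_band_projections_commute
    {A : Type*} [NormedAddCommGroup A] [Lattice A] [IsOrderedAddMonoid A]
    [NormedSpace ℝ A]
    (mul : A →ₗ[ℝ] A →ₗ[ℝ] A)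
    (mul_assoc : ∀ a b c : A, mul (mul a b) c = mul a (mul b c))
    (mul_nonneg : ∀ a b : A, 0 ≤ a → 0 ≤ b → 0 ≤ mul a b)
    (a : A) (ha : 0 ≤ a)
    (haL : ∀ x : A, 0 ≤ x → mul a x ≤ x ∧ mul (mul a a) x = mul a x)
    (haR : ∀ x : A, 0 ≤ x → mul x a ≤ x ∧ mul x (mul a a) = mul x a)
    (b : A) (hb : 0 ≤ b)
    (hbL : ∀ x : A, 0 ≤ x → mul b x ≤ x ∧ mul (mul b b) x = mul b x)
    (hbR : ∀ x : A, 0 ≤ x → mul x b ≤ x ∧ mul x (mul b b) = mul x b) :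
    mul a b = mul b a := by
  have hLa := isBandProjection_mulLeft mul mul_assoc mul_nonneg ha haL
  have hLb := isBandProjection_mulLeft mul mul_assoc mul_nonneg hb hbL
  have haba : mul a (mul b a) = mul b a := (hLa.map_map_comm hLb ha).trans (haR b hb).2
  have hbab : mul b (mul a b) = mul a b := (hLb.map_map_comm hLa hb).trans (hbR a ha).2
  apply le_antisymm
  · calc mul a b = mul b (mul a b) := hbab.symm
      _ ≤ mul b a := hLb.monotone (hbR a ha).1
  · calc mul b a = mul a (mul b a) := haba.symm
      _ ≤ mul a b := hLa.monotone (haR b hb).1
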